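/- (Exponential price cap ensures feasibility) Let p(y) = (1/(2D))·(4HD)^{y/C} with D, H ≥ 1 and suppose C ≥ 2·c_max·ln(4HD)/ln 2. If y > C - c_max, then p(y) > H. Hence, if every job's value per unit of resource per round is at most H and jobs only purchase at nonnegative utility, total usage never exceeds C. -/
import Mathlib


/-- Exponential price cap ensures feasibility: with
`p(y) = (1/(2D))·(4HD)^{y/C}`, `H, D ≥ 1`, and `C ≥ 2·c_max·log(4HD)/log 2`
(natural logs), if `y > C - c_max` then `p(y) > H`.  Consequently, any purchase of
`w > 0` units at a round whose usage exceeds `C - c_max`, by a job whose value is at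
most `H` per unit of resource per round, yields strictly negative utility. -/
theorem stmt19 (H D cmax C y : ℝ) (hH : 1 ≤ H) (hD : 1 ≤ D) (hcmax : 0 < cmax)
    (hC : 2 * cmax * Real.log (4 * H * D) / Real.log 2 ≤ C)
    (hy : C - cmax < y)
    (p : ℝ → ℝ) (hp : ∀ z, p z = (1 / (2 * D)) * (4 * H * D) ^ (z / C)) :
    H < p y ∧ ∀ val w : ℝ, 0 < w → val ≤ H * w → val - p y * w < 0 := by
  have hA : (1:ℝ) < 4 * H * D := by nlinarith
  have hA0 : (0:ℝ) < 4 * H * D := by linarith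
  have hlogA : 0 < Real.log (4*H*D) := Real.log_pos hA
  have hlog2 : 0 < Real.log 2 := Real.log_pos (by norm_num)
  have hC0 : 0 < C := lt_of_lt_of_le (by positivity) hC
  have hD0 : (0:ℝ) < D := by linarith
  -- key : (4HD)^(cmax/C) < 2
  have hexp : cmax / C * Real.log (4*H*D) < Real.log 2 := by
    rw [div_le_iff₀ hlog2] at hC
    rw [div_mul_eq_mul_div, div_lt_iff₀ hC0]
    nlinarith
  have hkey : (4*H*D) ^ (cmax / C) < 2 := by
    rw [Real.rpow_def_of_pos hA0]
    calc Real.exp (Real.log (4*H*D) * (cmax / C))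
        < Real.exp (Real.log 2) := by
          apply Real.exp_lt_exp.mpr; rw [mul_comm]; exact hexp
      _ = 2 := Real.exp_log (by norm_num)
  have ht0 : 0 < (4*H*D) ^ (cmax / C) := Real.rpow_pos_of_pos hA0 _
  have hmono : (4*H*D) ^ ((C - cmax) / C) < (4*H*D) ^ (y / C) :=
    Real.rpow_lt_rpow_left_iff (x := 4*H*D) hA |>.mpr
      (div_lt_div_of_pos_right hy hC0)
  have hsub : (4*H*D) ^ ((C - cmax) / C)
      = (4*H*D) / (4*H*D) ^ (cmax / C) := by
    have : (C - cmax) / C = 1 - cmax / C := by field_simp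
    rw [this, Real.rpow_sub hA0, Real.rpow_one]
  have hu : 2 * H * D < (4*H*D) ^ (y / C) := by
    have h1 : (4*H*D) / (4*H*D) ^ (cmax / C) < (4*H*D) ^ (y / C) := by
      rw [← hsub]; exact hmono
    have h2 : 4*H*D < (4*H*D) ^ (y / C) * (4*H*D) ^ (cmax / C) := by
      rw [div_lt_iff₀ ht0] at h1; linarith
    nlinarith [Real.rpow_pos_of_pos hA0 (y / C)]
  have hHp : H < p y := by
    rw [hp]
    rw [show (1:ℝ) / (2*D) * (4*H*D) ^ (y / C) = (4*H*D) ^ (y / C) / (2*D) by ring,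
      lt_div_iff₀ (by positivity)]
    nlinarith
  refine ⟨hHp, fun val w hw hval => ?_⟩
  nlinarith
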